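/- The semigroup A presented by ⟨a, b | a*a*b = a⟩ is not LEF. -/

import Mathlib

/-!
In a finite semigroup the quasi-identity `x * x * y = x → x * y * x = x` holds: the relation gives
`x ^ (k + 1) * y ^ k = x` for all `k`, and comparing two equal powers of `x` turns this into
`x ^ (n + 2) = x`, whence `x * y * x = x ^ n * (x * x * y) * x = x`. A quasi-identity involving
only the five elements `x, x * x, y, x * y, x * y * x` passes to every LEF semigroup. In `A` it
fails: `a ↦ (· - 1)`, `b ↦ (max (· + 1) 2)` defines a representation of `A` by maps `ℕ → ℕ`
in which `a * b * a` and `a` act differently at `0`.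
-/

namespace Stmt3

def IsLEF (S : Type*) [Semigroup S] : Prop :=
  ∀ H : Finset S, ∃ (F : Type) (_ : Semigroup F) (_ : Fintype F) (f : S → F),
    Set.InjOn f ↑H ∧
      ∀ x ∈ H, ∀ y ∈ H, x * y ∈ H → f (x * y) = f x * f y

def a : FreeSemigroup (Fin 2) := FreeSemigroup.of 0

def b : FreeSemigroup (Fin 2) := FreeSemigroup.of 1

def rel : FreeSemigroup (Fin 2) → FreeSemigroup (Fin 2) → Prop :=
  fun x y => x = a * a * b ∧ y = a

def A : Type := (conGen rel).Quotient

instance : Semigroup A := Con.semigroup _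

end Stmt3

theorem pow_succ_mul_pow_eq_self_of_mul_self_mul_eq_self {M : Type*} [Monoid M] {x y : M}
    (h : x * x * y = x) (k : ℕ) : x ^ (k + 1) * y ^ k = x := by
  induction k with
  | zero => simp
  | succ k ih =>
    calc x ^ (k + 1 + 1) * y ^ (k + 1) = x ^ k * (x * x * y) * y ^ k := by
          rw [pow_succ x (k + 1), pow_succ x k, pow_succ' y k]; simp only [mul_assoc]
      _ = x ^ (k + 1) * y ^ k := by rw [h, pow_succ]
      _ = x := ih

theorem exists_pow_add_two_eq_self_of_mul_self_mul_eq_self {M : Type*} [Monoid M] [Finite M]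
    {x y : M} (h : x * x * y = x) : ∃ n : ℕ, x ^ (n + 2) = x := by
  obtain ⟨i, j, hij, hpow⟩ := Set.finite_univ.exists_lt_map_eq_of_forall_mem
    (f := fun n : ℕ => x ^ (n + 1)) (fun _ => Set.mem_univ _)
  obtain ⟨n, rfl⟩ := Nat.exists_eq_add_of_lt hij
  refine ⟨n, ?_⟩
  have hshift : x ^ (i + n + 1 + 1) = x ^ (n + 1) * x ^ (i + 1) := by
    rw [← pow_add]; ring_nf
  calc x ^ (n + 2) = x ^ (n + 1) * x := by rw [pow_succ]
    _ = x ^ (n + 1) * (x ^ (i + 1) * y ^ i) := by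
        rw [pow_succ_mul_pow_eq_self_of_mul_self_mul_eq_self h]
    _ = x ^ (i + n + 1 + 1) * y ^ i := by rw [hshift, mul_assoc]
    _ = x := by rw [← show x ^ (i + 1) = _ from hpow,
        pow_succ_mul_pow_eq_self_of_mul_self_mul_eq_self h]

theorem mul_mul_eq_self_of_mul_self_mul_eq_self {S : Type*} [Semigroup S] [Finite S] {x y : S}
    (h : x * x * y = x) : x * y * x = x := by
  have : Finite (WithOne S) := inferInstanceAs (Finite (Option S))
  have h' : (x : WithOne S) * x * y = x := by rw [← WithOne.coe_mul, ← WithOne.coe_mul, h]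
  obtain ⟨n, hn⟩ := exists_pow_add_two_eq_self_of_mul_self_mul_eq_self h'
  suffices (x : WithOne S) * y * x = x by
    rwa [← WithOne.coe_mul, ← WithOne.coe_mul, WithOne.coe_inj] at this
  calc (x : WithOne S) * y * x = x ^ (n + 2) * y * x := by nth_rewrite 1 [← hn]; rfl
    _ = x ^ n * (x * x * y) * x := by simp only [pow_succ, mul_assoc]
    _ = x ^ (n + 2) := by rw [h', pow_succ, pow_succ]
    _ = x := hn

namespace Stmt3

theorem IsLEF.mul_mul_eq_self_of_mul_self_mul_eq_self {S : Type*} [Semigroup S] (hS : IsLEF S)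
    {x y : S} (h : x * x * y = x) : x * y * x = x := by
  classical
  obtain ⟨F, _, _, f, hinj, hf⟩ := hS {x, x * x, y, x * y, x * y * x}
  have hx : f (x * x) = f x * f x := hf _ (by simp) _ (by simp) (by simp)
  have hF : f x * f x * f y = f x := by
    rw [← hx, ← hf _ (by simp) _ (by simp) (by simp [h]), h]
  have hxyx : f (x * y * x) = f x * f y * f x := by
    rw [hf _ (by simp) _ (by simp) (by simp), hf _ (by simp) _ (by simp) (by simp)]
  exact hinj (by simp) (by simp) (by rw [hxyx, _root_.mul_mul_eq_self_of_mul_self_mul_eq_self hF])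

def modelA : Function.End ℕ := fun n => n - 1

def modelB : Function.End ℕ := fun n => max (n + 1) 2

def model : FreeSemigroup (Fin 2) →ₙ* Function.End ℕ :=
  FreeSemigroup.lift ![modelA, modelB]

theorem conGen_rel_le_ker_model : conGen rel ≤ Con.ker model := by
  refine Con.conGen_le.2 ?_
  rintro _ _ ⟨rfl, rfl⟩
  funext n
  show modelA (modelA (modelB n)) = modelA n
  simp only [modelA, modelB]
  omega

theorem not_conGen_rel_aba_a : ¬ conGen rel (a * b * a) a := by
  intro hrel
  have h0 : modelA (modelB (modelA 0)) = modelA 0 := congrFun (conGen_rel_le_ker_model hrel) 0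
  simp [modelA, modelB] at h0

/-- The semigroup `A = ⟨a, b ∣ aab = a⟩` is not LEF. -/
theorem A_not_isLEF : ¬ IsLEF A := by
  intro hA
  let α : A := (a : (conGen rel).Quotient)
  let β : A := (b : (conGen rel).Quotient)
  have hαβ : α * α * β = α := (Con.eq _).2 (ConGen.Rel.of _ _ ⟨rfl, rfl⟩)
  exact not_conGen_rel_aba_a ((Con.eq _).1 (hA.mul_mul_eq_self_of_mul_self_mul_eq_self hαβ))

end Stmt3
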